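/- Adversarial update reward-budget bound (Theorem 4.2, reward part): in a finite discounted MDP, let δ > 0, ε_R ≥ 0, and let R : S → A → ℝ be a reward signal. Suppose a min-cost stage π_0, …, π_{n2} satisfies for every i < n2: (π_i s a = 0 → π_{i+1} s a = 0), D̄_KL(π_{i+1}‖π_i) ≤ δ, J_R(π_i) + (1/(1−γ)) · 𝔸_R(π_i, π_{i+1}) ≥ J_R(π_0), and ε_R(π_i, π_{i+1}) ≤ ε_R; and a subsequent max-reward stage σ_0 = π_{n2}, σ_1, …, σ_{n1} satisfies for every i < n1: (σ_i s a = 0 → σ_{i+1} s a = 0), D̄_KL(σ_{i+1}‖σ_i) ≤ δ, 𝔸_R(σ_i, σ_{i+1}) ≥ 0, and ε_R(σ_i, σ_{i+1}) ≤ ε_R. Then J_R(σ_{n1}) − J_R(π_0) ≥ − (√(2δ) · γ / (1−γ)²) · (n1 + n2) · ε_R. -/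

import Mathlib

/-!
A single trust-region step `π → π'` achieves its surrogate prediction `J(π) + 𝔸(π, π')/(1 - γ)`
up to `√(2δ) γ ε / (1 - γ)²`. By the performance-difference identity,
`(1 - γ) (J(π') - J(π)) = ⟨d_π', Ā⟩` with `Ā(s) = ∑ₐ π'(s,a) A^π(s,a)`, whereas the surrogate
uses `⟨d_π, Ā⟩`; `|Ā| ≤ ε`, and the flow equation `d = (1 - γ) ρ + γ d P_π` gives
`‖d_π' - d_π‖₁ ≤ γ/(1 - γ) · E_{d_π} ‖π'(s) - π(s)‖₁ ≤ γ/(1 - γ) · √(2 D̄_KL)` by Pinsker's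
inequality and Cauchy–Schwarz. In the max-reward stage the surrogate advantage is nonnegative, so
each of the `n1` steps loses at most that amount. In the min-cost stage the surrogate constraint
bounds the prediction of every step below by `J(π₀)`, so only the last step counts.
-/

open Real BigOperators

/-- Induced transition matrix of policy `pol`: `P_pol(s,s') = ∑ a, pol s a * P s a s'`. -/
noncomputable def transMat {S A : Type*} [Fintype A] (P : S → A → S → ℝ)
    (pol : S → A → ℝ) : Matrix S S ℝ :=
  fun s s' => ∑ a, pol s a * P s a s'

/-- Discounted state visitation distribution
`d_pol(s) = (1-γ) ∑ₜ γ^t ∑_{s0} ρ0 s0 * (P_pol^t)(s0,s)`. -/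
noncomputable def dVisit {S A : Type*} [Fintype S] [DecidableEq S] [Fintype A]
    (P : S → A → S → ℝ) (γ : ℝ) (ρ0 : S → ℝ) (pol : S → A → ℝ) (s : S) : ℝ :=
  (1 - γ) * ∑' t : ℕ, γ ^ t * ∑ s0, ρ0 s0 * (transMat P pol ^ t) s0 s

/-- Value function of signal `F` under policy `pol`. -/
noncomputable def Vfun {S A : Type*} [Fintype S] [DecidableEq S] [Fintype A]
    (P : S → A → S → ℝ) (γ : ℝ) (F : S → A → ℝ) (pol : S → A → ℝ) (s : S) : ℝ :=
  ∑' t : ℕ, γ ^ t * ∑ s', (transMat P pol ^ t) s s' * ∑ a, pol s' a * F s' a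

/-- Return `J_F(pol) = ∑ s, ρ0 s * V_F^pol(s)`. -/
noncomputable def Jret {S A : Type*} [Fintype S] [DecidableEq S] [Fintype A]
    (P : S → A → S → ℝ) (γ : ℝ) (ρ0 : S → ℝ) (F : S → A → ℝ) (pol : S → A → ℝ) : ℝ :=
  ∑ s, ρ0 s * Vfun P γ F pol s

/-- Action-value function `Q_F^pol(s,a) = F s a + γ ∑_{s'} P s a s' * V_F^pol(s')`. -/
noncomputable def Qfun {S A : Type*} [Fintype S] [DecidableEq S] [Fintype A]
    (P : S → A → S → ℝ) (γ : ℝ) (F : S → A → ℝ) (pol : S → A → ℝ) (s : S) (a : A) : ℝ :=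
  F s a + γ * ∑ s', P s a s' * Vfun P γ F pol s'

/-- Advantage function `A_F^pol(s,a) = Q_F^pol(s,a) - V_F^pol(s)`. -/
noncomputable def Adv {S A : Type*} [Fintype S] [DecidableEq S] [Fintype A]
    (P : S → A → S → ℝ) (γ : ℝ) (F : S → A → ℝ) (pol : S → A → ℝ) (s : S) (a : A) : ℝ :=
  Qfun P γ F pol s a - Vfun P γ F pol s

/-- Expected surrogate advantage
`𝔸_F(pol,pol') = ∑ s, d_pol(s) ∑ a, pol' s a * A_F^pol(s,a)`. -/
noncomputable def surrAdv {S A : Type*} [Fintype S] [DecidableEq S] [Fintype A]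
    (P : S → A → S → ℝ) (γ : ℝ) (ρ0 : S → ℝ) (F : S → A → ℝ)
    (pol pol' : S → A → ℝ) : ℝ :=
  ∑ s, dVisit P γ ρ0 pol s * ∑ a, pol' s a * Adv P γ F pol s a

/-- `ε_F(pol,pol') = max_s |∑ a, pol' s a * A_F^pol(s,a)|`. -/
noncomputable def epsAdv {S A : Type*} [Fintype S] [DecidableEq S] [Fintype A] [Nonempty S]
    (P : S → A → S → ℝ) (γ : ℝ) (F : S → A → ℝ) (pol pol' : S → A → ℝ) : ℝ :=
  Finset.univ.sup' Finset.univ_nonempty fun s => |∑ a, pol' s a * Adv P γ F pol s a|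

/-- Per-state KL divergence `KL(pol'‖pol)(s) = ∑ a, pol' s a * log (pol' s a / pol s a)`
(with the convention `0 * log 0 = 0`, automatic since `Real.log 0 = 0`). -/
noncomputable def klState {S A : Type*} [Fintype A] (pol' pol : S → A → ℝ) (s : S) : ℝ :=
  ∑ a, pol' s a * Real.log (pol' s a / pol s a)

/-- Averaged KL divergence `D̄_KL(pol'‖pol) = ∑ s, d_pol(s) * KL(pol'‖pol)(s)`. -/
noncomputable def avgKL {S A : Type*} [Fintype S] [DecidableEq S] [Fintype A]
    (P : S → A → S → ℝ) (γ : ℝ) (ρ0 : S → ℝ) (pol' pol : S → A → ℝ) : ℝ :=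
  ∑ s, dVisit P γ ρ0 pol s * klState pol' pol s


open InformationTheory Matrix

lemma monotoneOn_add_one_mul_log_sub :
    MonotoneOn (fun x : ℝ => (x + 1) * log x - 2 * (x - 1)) (Set.Ioi 0) := by
  refine monotoneOn_of_hasDerivWithinAt_nonneg (convex_Ioi 0)
    (f' := fun x => log x + (x + 1) * x⁻¹ - 2) ?_ (fun x hx => ?_) (fun x hx => ?_)
  · exact fun x hx => ((continuousAt_id.add continuousAt_const).mul
      (continuousAt_log (ne_of_gt hx)) |>.sub (by fun_prop)).continuousWithinAt
  · rw [interior_Ioi] at hx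
    have h := (((hasDerivAt_id' x).add_const 1).mul (hasDerivAt_log (ne_of_gt hx))).sub
      (((hasDerivAt_id' x).sub_const 1).const_mul 2)
    exact (h.congr_deriv (by ring)).hasDerivWithinAt
  · rw [interior_Ioi] at hx
    have hx : (0 : ℝ) < x := hx
    have := one_sub_inv_le_log_of_pos hx
    rw [add_mul, mul_inv_cancel₀ hx.ne', one_mul]
    linarith

lemma three_mul_sq_sub_one_le_klFun {x : ℝ} (hx : 0 ≤ x) :
    3 * (x - 1) ^ 2 ≤ 2 * (x + 2) * klFun x := by
  rcases hx.eq_or_lt with rfl | hx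
  · norm_num [klFun_zero]
  let g : ℝ → ℝ := fun x => 2 * (x + 2) * klFun x - 3 * (x - 1) ^ 2
  -- `g'` is a multiple of the function above, which is `≤ 0` on `(0, 1]` and `≥ 0` on `[1, ∞)`.
  have hg : ∀ y, 0 < y → HasDerivAt g (4 * ((y + 1) * log y - 2 * (y - 1))) y := by
    intro y hy
    have h := ((((hasDerivAt_id' y).add_const 2).const_mul 2).mul (hasDerivAt_klFun hy.ne')).sub
      ((((hasDerivAt_id' y).sub_const 1).pow 2).const_mul 3)
    exact h.congr_deriv (by rw [klFun_apply]; ring)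
  have hf := monotoneOn_add_one_mul_log_sub
  suffices g 1 ≤ g x by simpa [g, klFun_one] using this
  rcases le_total 1 x with h1 | h1
  · refine monotoneOn_of_hasDerivWithinAt_nonneg (convex_Ici 1)
      (fun y hy => (hg y (one_pos.trans_le hy)).continuousAt.continuousWithinAt)
      (fun y hy => (hg y ?_).hasDerivWithinAt) (fun y hy => ?_) Set.self_mem_Ici h1 h1
    · rw [interior_Ici] at hy; exact one_pos.trans hy
    · rw [interior_Ici] at hy
      have := hf (Set.mem_Ioi.2 one_pos) (Set.mem_Ioi.2 (one_pos.trans hy)) hy.le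
      simp only [log_one, mul_zero, sub_self] at this
      linarith
  · refine antitoneOn_of_hasDerivWithinAt_nonpos (convex_Ioc 0 1)
      (fun y hy => (hg y hy.1).continuousAt.continuousWithinAt)
      (fun y hy => (hg y ?_).hasDerivWithinAt) (fun y hy => ?_) ⟨hx, h1⟩ ⟨one_pos, le_rfl⟩ h1
    · rw [interior_Ioc] at hy; exact hy.1
    · rw [interior_Ioc] at hy
      have := hf hy.1 (Set.mem_Ioi.2 one_pos) hy.2.le
      simp only [log_one, mul_zero, sub_self] at this
      linarith

lemma mul_klFun_div {p q : ℝ} (hpq : q = 0 → p = 0) :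
    q * klFun (p / q) = p * log (p / q) + q - p := by
  rcases eq_or_ne q 0 with rfl | hq
  · simp [hpq rfl]
  · rw [klFun_apply]
    field_simp

lemma three_mul_sq_sub_le_mul_klFun {p q : ℝ} (hp : 0 ≤ p) (hq : 0 ≤ q) (hpq : q = 0 → p = 0) :
    3 * (p - q) ^ 2 ≤ (p + 2 * q) * (2 * (q * klFun (p / q))) := by
  rcases hq.eq_or_lt with rfl | hq
  · simp [hpq rfl]
  have key := mul_le_mul_of_nonneg_left (three_mul_sq_sub_one_le_klFun (div_nonneg hp hq.le))
    (sq_nonneg q)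
  have hp_eq : p = q * (p / q) := by field_simp
  calc 3 * (p - q) ^ 2 = q ^ 2 * (3 * (p / q - 1) ^ 2) := by rw [hp_eq]; field_simp
    _ ≤ q ^ 2 * (2 * (p / q + 2) * klFun (p / q)) := key
    _ = (p + 2 * q) * (2 * (q * klFun (p / q))) := by rw [hp_eq]; field_simp

-- Cauchy–Schwarz against the weights `(p + 2q)/3`, which sum to one.
theorem sq_sum_abs_sub_le_two_mul_sum_mul_log {ι : Type*} [Fintype ι] {p q : ι → ℝ}
    (hp : p ∈ stdSimplex ℝ ι) (hq : q ∈ stdSimplex ℝ ι) (hpq : ∀ i, q i = 0 → p i = 0) :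
    (∑ i, |p i - q i|) ^ 2 ≤ 2 * ∑ i, p i * log (p i / q i) := by
  have hCS := Finset.sum_sq_le_sum_mul_sum_of_sq_le_mul Finset.univ
    (r := fun i => |p i - q i|) (f := fun i => (p i + 2 * q i) / 3)
    (g := fun i => 2 * (q i * klFun (p i / q i)))
    (fun i _ => by have := hp.1 i; have := hq.1 i; positivity)
    (fun i _ => mul_nonneg zero_le_two
      (mul_nonneg (hq.1 i) (klFun_nonneg (div_nonneg (hp.1 i) (hq.1 i)))))
    (fun i _ => by
      have := three_mul_sq_sub_le_mul_klFun (hp.1 i) (hq.1 i) (hpq i)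
      rw [sq_abs, div_mul_eq_mul_div, le_div_iff₀ three_pos]
      linarith)
  have hf : ∑ i, (p i + 2 * q i) / 3 = 1 := by
    rw [← Finset.sum_div, Finset.sum_add_distrib, ← Finset.mul_sum, hp.2, hq.2]
    norm_num
  have hg : ∑ i, 2 * (q i * klFun (p i / q i)) = 2 * ∑ i, p i * log (p i / q i) := by
    simp only [mul_klFun_div (hpq _), ← Finset.mul_sum, Finset.sum_sub_distrib,
      Finset.sum_add_distrib, hp.2, hq.2, add_sub_cancel_right]
  rwa [hf, one_mul, hg] at hCS

namespace Matrix

variable {m n : Type*} [Fintype m] [Fintype n]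

lemma abs_dotProduct_le {x y : m → ℝ} {ε : ℝ} (hy : ∀ i, |y i| ≤ ε) :
    |x ⬝ᵥ y| ≤ (∑ i, |x i|) * ε := by
  refine (Finset.abs_sum_le_sum_abs _ _).trans ?_
  rw [Finset.sum_mul]
  exact Finset.sum_le_sum fun i _ => by
    rw [abs_mul]; exact mul_le_mul_of_nonneg_left (hy i) (abs_nonneg _)

lemma sum_abs_vecMul_le (x : m → ℝ) (N : Matrix m n ℝ) :
    ∑ j, |(x ᵥ* N) j| ≤ ∑ i, |x i| * ∑ j, |N i j| := by
  calc ∑ j, |(x ᵥ* N) j| ≤ ∑ j, ∑ i, |x i| * |N i j| :=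
        Finset.sum_le_sum fun j _ => (Finset.abs_sum_le_sum_abs _ _).trans_eq (by simp [abs_mul])
    _ = ∑ i, |x i| * ∑ j, |N i j| := by rw [Finset.sum_comm]; simp only [Finset.mul_sum]

variable [DecidableEq n] {M : Matrix n n ℝ} {γ : ℝ}

-- The Neumann series of `(1 - γ • M)⁻¹`.
noncomputable def discountedResolvent (γ : ℝ) (M : Matrix n n ℝ) : Matrix n n ℝ :=
  ∑' t : ℕ, γ ^ t • M ^ t

lemma hasSum_discountedResolvent (hM : M ∈ rowStochastic ℝ n) (hγ0 : 0 ≤ γ) (hγ1 : γ < 1) :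
    HasSum (fun t : ℕ => γ ^ t • M ^ t) (discountedResolvent γ M) := by
  refine Summable.hasSum (Pi.summable.2 fun i => Pi.summable.2 fun j => ?_)
  refine Summable.of_nonneg_of_le (fun t => ?_) (fun t => ?_)
    (summable_geometric_of_lt_one hγ0 hγ1)
  · exact mul_nonneg (pow_nonneg hγ0 t) (nonneg_of_mem_rowStochastic (pow_mem hM t))
  · exact mul_le_of_le_one_right (pow_nonneg hγ0 t) (le_one_of_mem_rowStochastic (pow_mem hM t))

lemma hasSum_discountedResolvent_apply (hM : M ∈ rowStochastic ℝ n) (hγ0 : 0 ≤ γ)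
    (hγ1 : γ < 1) (i j : n) :
    HasSum (fun t : ℕ => γ ^ t * (M ^ t) i j) (discountedResolvent γ M i j) :=
  Pi.hasSum.1 (Pi.hasSum.1 (hasSum_discountedResolvent hM hγ0 hγ1) i) j

lemma discountedResolvent_apply_nonneg (hM : M ∈ rowStochastic ℝ n) (hγ0 : 0 ≤ γ)
    (hγ1 : γ < 1) (i j : n) : 0 ≤ discountedResolvent γ M i j :=
  (hasSum_discountedResolvent_apply hM hγ0 hγ1 i j).nonneg fun t =>
    mul_nonneg (pow_nonneg hγ0 t) (nonneg_of_mem_rowStochastic (pow_mem hM t))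

lemma discountedResolvent_eq_one_add_smul_mul (hM : M ∈ rowStochastic ℝ n) (hγ0 : 0 ≤ γ)
    (hγ1 : γ < 1) : discountedResolvent γ M = 1 + γ • (discountedResolvent γ M * M) := by
  have h := hasSum_discountedResolvent hM hγ0 hγ1
  have hshift := (hasSum_nat_add_iff' 1).2 h
  rw [Finset.sum_range_one, pow_zero, pow_zero, one_smul] at hshift
  have hterm : ∀ t : ℕ, γ ^ (t + 1) • M ^ (t + 1) = γ • (γ ^ t • M ^ t * M) := fun t => by
    rw [pow_succ', pow_succ, mul_smul, smul_mul_assoc]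
  simp only [hterm] at hshift
  exact eq_add_of_sub_eq' (hshift.unique ((h.mul_right M).const_smul γ))

lemma smul_discountedResolvent_mulVec_one (hM : M ∈ rowStochastic ℝ n) (hγ0 : 0 ≤ γ)
    (hγ1 : γ < 1) : (1 - γ) • (discountedResolvent γ M *ᵥ 1) = 1 := by
  have h := congrArg (· *ᵥ (1 : n → ℝ)) (discountedResolvent_eq_one_add_smul_mul hM hγ0 hγ1)
  simp only [add_mulVec, one_mulVec, smul_mulVec, ← mulVec_mulVec,
    one_vecMul_of_mem_rowStochastic hM] at h
  rwa [sub_smul, one_smul, sub_eq_iff_eq_add]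

-- `d' - d = γ ((d' - d) M' + d (M' - M))`, and right multiplication by `M'` is `ℓ¹`-nonexpansive.
theorem sum_abs_sub_le_of_eq_add {M' : Matrix n n ℝ} {ρ d d' : n → ℝ}
    (hM' : M' ∈ rowStochastic ℝ n) (hγ0 : 0 ≤ γ)
    (hd : d = (1 - γ) • ρ + γ • (d ᵥ* M)) (hd' : d' = (1 - γ) • ρ + γ • (d' ᵥ* M'))
    (hd0 : 0 ≤ d) :
    (1 - γ) * ∑ i, |d' i - d i| ≤ γ * ∑ i, d i * ∑ j, |M' i j - M i j| := by
  have hdiff : d' - d = γ • ((d' - d) ᵥ* M' + d ᵥ* (M' - M)) := by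
    calc d' - d = ((1 - γ) • ρ + γ • (d' ᵥ* M')) - ((1 - γ) • ρ + γ • (d ᵥ* M)) := by
          rw [← hd, ← hd']
      _ = _ := by rw [sub_vecMul, vecMul_sub]; module
  have h1 := sum_abs_vecMul_le (d' - d) M'
  have h2 := sum_abs_vecMul_le d (M' - M)
  simp only [fun i j => abs_of_nonneg (nonneg_of_mem_rowStochastic hM' (i := i) (j := j)),
    sum_row_of_mem_rowStochastic hM', mul_one] at h1
  simp only [fun i => abs_of_nonneg (hd0 i), sub_apply] at h2
  have key : ∑ i, |d' i - d i| ≤ γ * (∑ i, |d' i - d i| + ∑ i, d i * ∑ j, |M' i j - M i j|) :=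
    calc ∑ i, |d' i - d i| = ∑ i, |(d' - d) i| := rfl
      _ = γ * ∑ i, |((d' - d) ᵥ* M' + d ᵥ* (M' - M)) i| := by
          conv_lhs => rw [hdiff]
          simp only [Pi.smul_apply, smul_eq_mul, abs_mul, abs_of_nonneg hγ0, Finset.mul_sum]
      _ ≤ γ * (∑ i, |((d' - d) ᵥ* M') i| + ∑ i, |(d ᵥ* (M' - M)) i|) := by
          gcongr
          rw [← Finset.sum_add_distrib]
          exact Finset.sum_le_sum fun i _ => abs_add_le _ _
      _ ≤ _ := mul_le_mul_of_nonneg_left (add_le_add h1 h2) hγ0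
  linarith

end Matrix

section MDP

variable {S A : Type*} [Fintype S] [Fintype A] {P : S → A → S → ℝ} {γ : ℝ} {ρ0 : S → ℝ}
  {pol pol' : S → A → ℝ}

lemma sum_abs_transMat_sub_le (hP : ∀ s a, P s a ∈ stdSimplex ℝ S) (s : S) :
    ∑ s', |transMat P pol' s s' - transMat P pol s s'| ≤ ∑ a, |pol' s a - pol s a| :=
  calc ∑ s', |transMat P pol' s s' - transMat P pol s s'|
      = ∑ s', |((pol' s - pol s) ᵥ* of (P s)) s'| := by rw [sub_vecMul]; rfl
    _ ≤ ∑ a, |pol' s a - pol s a| * ∑ s', |P s a s'| := sum_abs_vecMul_le _ _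
    _ = ∑ a, |pol' s a - pol s a| := by
        simp only [fun a s' => abs_of_nonneg ((hP s a).1 s'), (hP s _).2, mul_one]

theorem sq_sum_mul_sum_abs_sub_le_two_mul_sum_mul_klState {w : S → ℝ} (hw : w ∈ stdSimplex ℝ S)
    (hpol : ∀ s, pol s ∈ stdSimplex ℝ A) (hpol' : ∀ s, pol' s ∈ stdSimplex ℝ A)
    (habs : ∀ s a, pol s a = 0 → pol' s a = 0) :
    (∑ s, w s * ∑ a, |pol' s a - pol s a|) ^ 2 ≤ 2 * ∑ s, w s * klState pol' pol s := by
  have hpinsker s := sq_sum_abs_sub_le_two_mul_sum_mul_log (hpol' s) (hpol s) (habs s)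
  have h := Finset.sum_sq_le_sum_mul_sum_of_sq_le_mul Finset.univ
    (r := fun s => w s * ∑ a, |pol' s a - pol s a|) (f := w)
    (g := fun s => w s * (2 * klState pol' pol s)) (fun s _ => hw.1 s)
    (fun s _ => mul_nonneg (hw.1 s) ((sq_nonneg _).trans (hpinsker s)))
    (fun s _ => by
      rw [mul_pow, ← mul_assoc, ← sq]
      exact mul_le_mul_of_nonneg_left (hpinsker s) (sq_nonneg _))
  rwa [hw.2, one_mul, ← Finset.sum_congr rfl fun s _ => mul_left_comm 2 (w s) _,
    ← Finset.mul_sum] at h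

variable [DecidableEq S]

lemma transMat_mem_rowStochastic (hP : ∀ s a, P s a ∈ stdSimplex ℝ S)
    (hpol : ∀ s, pol s ∈ stdSimplex ℝ A) : transMat P pol ∈ rowStochastic ℝ S := by
  refine mem_rowStochastic_iff_sum.2 ⟨fun s s' => Finset.sum_nonneg fun a _ =>
    mul_nonneg ((hpol s).1 a) ((hP s a).1 s'), fun s => ?_⟩
  simp only [transMat]
  rw [Finset.sum_comm]
  simp only [← Finset.mul_sum, (hP _ _).2, mul_one, (hpol s).2]

lemma dVisit_eq_smul_vecMul (hP : ∀ s a, P s a ∈ stdSimplex ℝ S)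
    (hpol : ∀ s, pol s ∈ stdSimplex ℝ A) (hγ0 : 0 ≤ γ) (hγ1 : γ < 1) :
    dVisit P γ ρ0 pol = (1 - γ) • (ρ0 ᵥ* discountedResolvent γ (transMat P pol)) := by
  funext s
  simp only [dVisit, Pi.smul_apply, smul_eq_mul, vecMul, dotProduct]
  congr 1
  refine HasSum.tsum_eq ((hasSum_sum fun s0 _ => (hasSum_discountedResolvent_apply
    (transMat_mem_rowStochastic hP hpol) hγ0 hγ1 s0 s).mul_left (ρ0 s0)).congr_fun fun t => ?_)
  rw [Finset.mul_sum]
  ring_nf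

lemma Vfun_eq_mulVec (hP : ∀ s a, P s a ∈ stdSimplex ℝ S)
    (hpol : ∀ s, pol s ∈ stdSimplex ℝ A) (hγ0 : 0 ≤ γ) (hγ1 : γ < 1) (F : S → A → ℝ) :
    Vfun P γ F pol = discountedResolvent γ (transMat P pol) *ᵥ fun s => pol s ⬝ᵥ F s := by
  funext s
  simp only [Vfun, mulVec, dotProduct]
  refine HasSum.tsum_eq ((hasSum_sum fun s' _ => (hasSum_discountedResolvent_apply
    (transMat_mem_rowStochastic hP hpol) hγ0 hγ1 s s').mul_right
    (∑ a, pol s' a * F s' a)).congr_fun fun t => ?_)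
  rw [Finset.mul_sum]
  ring_nf

lemma Jret_eq_dotProduct (F : S → A → ℝ) : Jret P γ ρ0 F pol = ρ0 ⬝ᵥ Vfun P γ F pol := rfl

lemma dVisit_eq_add (hP : ∀ s a, P s a ∈ stdSimplex ℝ S)
    (hpol : ∀ s, pol s ∈ stdSimplex ℝ A) (hγ0 : 0 ≤ γ) (hγ1 : γ < 1) :
    dVisit P γ ρ0 pol = (1 - γ) • ρ0 + γ • (dVisit P γ ρ0 pol ᵥ* transMat P pol) := by
  rw [dVisit_eq_smul_vecMul hP hpol hγ0 hγ1]
  conv_lhs => rw [discountedResolvent_eq_one_add_smul_mul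
    (transMat_mem_rowStochastic hP hpol) hγ0 hγ1]
  rw [vecMul_add, vecMul_one, vecMul_smul, smul_vecMul, vecMul_vecMul, smul_add, smul_comm γ]

lemma dVisit_nonneg (hP : ∀ s a, P s a ∈ stdSimplex ℝ S)
    (hpol : ∀ s, pol s ∈ stdSimplex ℝ A) (hγ0 : 0 ≤ γ) (hγ1 : γ < 1) (hρ : 0 ≤ ρ0) :
    0 ≤ dVisit P γ ρ0 pol := by
  rw [dVisit_eq_smul_vecMul hP hpol hγ0 hγ1]
  exact smul_nonneg (sub_nonneg.2 hγ1.le) fun s => Finset.sum_nonneg fun s0 _ =>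
    mul_nonneg (hρ s0)
      (discountedResolvent_apply_nonneg (transMat_mem_rowStochastic hP hpol) hγ0 hγ1 s0 s)

lemma sum_dVisit (hP : ∀ s a, P s a ∈ stdSimplex ℝ S)
    (hpol : ∀ s, pol s ∈ stdSimplex ℝ A) (hγ0 : 0 ≤ γ) (hγ1 : γ < 1) (hρ : ∑ s, ρ0 s = 1) :
    ∑ s, dVisit P γ ρ0 pol s = 1 := by
  rw [← dotProduct_one, dVisit_eq_smul_vecMul hP hpol hγ0 hγ1, smul_dotProduct,
    ← dotProduct_mulVec, ← dotProduct_smul,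
    smul_discountedResolvent_mulVec_one (transMat_mem_rowStochastic hP hpol) hγ0 hγ1,
    dotProduct_one, hρ]

lemma dVisit_dotProduct (hP : ∀ s a, P s a ∈ stdSimplex ℝ S)
    (hpol : ∀ s, pol s ∈ stdSimplex ℝ A) (hγ0 : 0 ≤ γ) (hγ1 : γ < 1) (F : S → A → ℝ) :
    dVisit P γ ρ0 pol ⬝ᵥ (fun s => pol s ⬝ᵥ F s) = (1 - γ) * Jret P γ ρ0 F pol := by
  rw [dVisit_eq_smul_vecMul hP hpol hγ0 hγ1, Jret_eq_dotProduct, Vfun_eq_mulVec hP hpol hγ0 hγ1,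
    smul_dotProduct, dotProduct_mulVec, smul_eq_mul]

lemma dotProduct_Adv (hpol' : ∀ s, ∑ a, pol' s a = 1) (F : S → A → ℝ) (s : S) :
    pol' s ⬝ᵥ Adv P γ F pol s =
      pol' s ⬝ᵥ F s + γ * (transMat P pol' *ᵥ Vfun P γ F pol) s - Vfun P γ F pol s := by
  have hAdv : Adv P γ F pol s =
      F s + γ • (of (P s) *ᵥ Vfun P γ F pol) - Vfun P γ F pol s • 1 := by
    ext a
    simp [Adv, Qfun, mulVec, dotProduct]
  rw [hAdv, dotProduct_sub, dotProduct_add, dotProduct_smul, dotProduct_mulVec, dotProduct_smul,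
    dotProduct_one, hpol', smul_eq_mul, smul_eq_mul, mul_one]
  rfl

theorem dVisit_dotProduct_Adv (hP : ∀ s a, P s a ∈ stdSimplex ℝ S)
    (hpol' : ∀ s, pol' s ∈ stdSimplex ℝ A) (hγ0 : 0 ≤ γ) (hγ1 : γ < 1) (F : S → A → ℝ) :
    dVisit P γ ρ0 pol' ⬝ᵥ (fun s => pol' s ⬝ᵥ Adv P γ F pol s) =
      (1 - γ) * (Jret P γ ρ0 F pol' - Jret P γ ρ0 F pol) := by
  have hflow : γ • (dVisit P γ ρ0 pol' ᵥ* transMat P pol') = dVisit P γ ρ0 pol' - (1 - γ) • ρ0 :=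
    eq_sub_of_add_eq' (dVisit_eq_add hP hpol' hγ0 hγ1).symm
  have hg : (fun s => pol' s ⬝ᵥ Adv P γ F pol s) = (fun s => pol' s ⬝ᵥ F s) +
      γ • (transMat P pol' *ᵥ Vfun P γ F pol) - Vfun P γ F pol :=
    funext (dotProduct_Adv (fun s => (hpol' s).2) F)
  rw [hg, dotProduct_sub, dotProduct_add, dVisit_dotProduct hP hpol' hγ0 hγ1, dotProduct_smul,
    dotProduct_mulVec, ← smul_dotProduct, hflow, sub_dotProduct, smul_dotProduct,
    Jret_eq_dotProduct F (pol := pol), smul_eq_mul]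
  ring

theorem sum_abs_dVisit_sub_le (hP : ∀ s a, P s a ∈ stdSimplex ℝ S)
    (hpol : ∀ s, pol s ∈ stdSimplex ℝ A) (hpol' : ∀ s, pol' s ∈ stdSimplex ℝ A)
    (hγ0 : 0 ≤ γ) (hγ1 : γ < 1) (hρ : 0 ≤ ρ0) :
    (1 - γ) * ∑ s, |dVisit P γ ρ0 pol' s - dVisit P γ ρ0 pol s| ≤
      γ * ∑ s, dVisit P γ ρ0 pol s * ∑ a, |pol' s a - pol s a| := by
  have hd := dVisit_nonneg hP hpol hγ0 hγ1 hρ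
  refine (sum_abs_sub_le_of_eq_add (transMat_mem_rowStochastic hP hpol') hγ0
    (dVisit_eq_add hP hpol hγ0 hγ1) (dVisit_eq_add hP hpol' hγ0 hγ1) hd).trans ?_
  gcongr with s
  · exact hd s
  · exact sum_abs_transMat_sub_le hP s

theorem sum_dVisit_mul_sum_abs_sub_le_sqrt (hP : ∀ s a, P s a ∈ stdSimplex ℝ S)
    (hρ : ρ0 ∈ stdSimplex ℝ S) (hγ0 : 0 ≤ γ) (hγ1 : γ < 1)
    (hpol : ∀ s, pol s ∈ stdSimplex ℝ A) (hpol' : ∀ s, pol' s ∈ stdSimplex ℝ A)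
    (habs : ∀ s a, pol s a = 0 → pol' s a = 0) {δ : ℝ} (hKL : avgKL P γ ρ0 pol' pol ≤ δ) :
    ∑ s, dVisit P γ ρ0 pol s * ∑ a, |pol' s a - pol s a| ≤ √(2 * δ) :=
  (le_abs_self _).trans <| Real.abs_le_sqrt <|
    (sq_sum_mul_sum_abs_sub_le_two_mul_sum_mul_klState
      ⟨dVisit_nonneg hP hpol hγ0 hγ1 hρ.1, sum_dVisit hP hpol hγ0 hγ1 hρ.2⟩ hpol hpol' habs).trans
    (mul_le_mul_of_nonneg_left hKL zero_le_two)

theorem Jret_add_surrAdv_sub_le [Nonempty S] (hP : ∀ s a, P s a ∈ stdSimplex ℝ S)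
    (hρ : ρ0 ∈ stdSimplex ℝ S) (hγ0 : 0 ≤ γ) (hγ1 : γ < 1)
    (hpol : ∀ s, pol s ∈ stdSimplex ℝ A) (hpol' : ∀ s, pol' s ∈ stdSimplex ℝ A)
    (habs : ∀ s a, pol s a = 0 → pol' s a = 0) {F : S → A → ℝ} {δ ε : ℝ}
    (hKL : avgKL P γ ρ0 pol' pol ≤ δ) (heps : epsAdv P γ F pol pol' ≤ ε) :
    Jret P γ ρ0 F pol + (1 - γ)⁻¹ * surrAdv P γ ρ0 F pol pol' - √(2 * δ) * γ / (1 - γ) ^ 2 * ε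
      ≤ Jret P γ ρ0 F pol' := by
  set g : S → ℝ := fun s => pol' s ⬝ᵥ Adv P γ F pol s
  have hg : ∀ s, |g s| ≤ ε := fun s => (Finset.le_sup' _ (Finset.mem_univ s)).trans heps
  have hε : 0 ≤ ε := (abs_nonneg _).trans (hg (Classical.arbitrary S))
  have hsplit : (1 - γ) * (Jret P γ ρ0 F pol' - Jret P γ ρ0 F pol) =
      surrAdv P γ ρ0 F pol pol' + (dVisit P γ ρ0 pol' - dVisit P γ ρ0 pol) ⬝ᵥ g := by
    rw [← dVisit_dotProduct_Adv hP hpol' hγ0 hγ1 F, sub_dotProduct]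
    exact (add_sub_cancel _ _).symm
  have hdrift := mul_le_mul_of_nonneg_right ((sum_abs_dVisit_sub_le hP hpol hpol' hγ0 hγ1 hρ.1).trans
    (mul_le_mul_of_nonneg_left
      (sum_dVisit_mul_sum_abs_sub_le_sqrt hP hρ hγ0 hγ1 hpol hpol' habs hKL) hγ0)) hε
  have hshift : |(dVisit P γ ρ0 pol' - dVisit P γ ρ0 pol) ⬝ᵥ g| ≤
      (∑ s, |dVisit P γ ρ0 pol' s - dVisit P γ ρ0 pol s|) * ε := abs_dotProduct_le hg
  have h1γ : 0 < 1 - γ := sub_pos.2 hγ1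
  have key : (1 - γ) * surrAdv P γ ρ0 F pol pol' - γ * √(2 * δ) * ε ≤
      (1 - γ) ^ 2 * (Jret P γ ρ0 F pol' - Jret P γ ρ0 F pol) := by
    rw [sq, mul_assoc (1 - γ) (1 - γ), hsplit]
    linarith [mul_le_mul_of_nonneg_left (abs_le.1 hshift).1 h1γ.le]
  calc _ = Jret P γ ρ0 F pol +
        ((1 - γ) * surrAdv P γ ρ0 F pol pol' - γ * √(2 * δ) * ε) / (1 - γ) ^ 2 := by
        field_simp; ring
    _ ≤ Jret P γ ρ0 F pol +
        (1 - γ) ^ 2 * (Jret P γ ρ0 F pol' - Jret P γ ρ0 F pol) / (1 - γ) ^ 2 := by gcongr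
    _ = Jret P γ ρ0 F pol' := by field_simp; ring

end MDP

lemma sub_mul_le_of_forall_sub_le_succ {f : ℕ → ℝ} {c : ℝ} {n : ℕ}
    (h : ∀ i < n, f i - c ≤ f (i + 1)) : f 0 - n * c ≤ f n := by
  induction n with
  | zero => simp
  | succ k ih =>
    have := ih fun i hi => h i (Nat.lt_succ_of_lt hi)
    have := h k (Nat.lt_succ_self k)
    push_cast
    linarith

theorem adversarial_reward_budget_bound_general {S A : Type*} [Fintype S] [DecidableEq S] [Fintype A] [Nonempty S]
    (P : S → A → S → ℝ) (hP0 : ∀ s a s', 0 ≤ P s a s') (hP1 : ∀ s a, ∑ s', P s a s' = 1)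
    (γ : ℝ) (hγ0 : 0 < γ) (hγ1 : γ < 1)
    (ρ0 : S → ℝ) (hρ0 : ∀ s, 0 ≤ ρ0 s) (hρ1 : ∑ s, ρ0 s = 1)
    (δ : ℝ) (εR : ℝ) (hεR : 0 ≤ εR) (R : S → A → ℝ)
    (n1 n2 : ℕ) (pol σ : ℕ → S → A → ℝ)
    (hpol0 : ∀ i ≤ n2, ∀ s a, 0 ≤ pol i s a)
    (hpol1 : ∀ i ≤ n2, ∀ s, ∑ a, pol i s a = 1)
    (hpabs : ∀ i < n2, ∀ s a, pol i s a = 0 → pol (i + 1) s a = 0)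
    (hpKL : ∀ i < n2, avgKL P γ ρ0 (pol (i + 1)) (pol i) ≤ δ)
    (hpsurr : ∀ i < n2,
      Jret P γ ρ0 R (pol 0) ≤
        Jret P γ ρ0 R (pol i) + (1 / (1 - γ)) * surrAdv P γ ρ0 R (pol i) (pol (i + 1)))
    (hpeps : ∀ i < n2, epsAdv P γ R (pol i) (pol (i + 1)) ≤ εR)
    (hlink : σ 0 = pol n2)
    (hσ0 : ∀ i ≤ n1, ∀ s a, 0 ≤ σ i s a)
    (hσ1 : ∀ i ≤ n1, ∀ s, ∑ a, σ i s a = 1)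
    (hσabs : ∀ i < n1, ∀ s a, σ i s a = 0 → σ (i + 1) s a = 0)
    (hσKL : ∀ i < n1, avgKL P γ ρ0 (σ (i + 1)) (σ i) ≤ δ)
    (hσA : ∀ i < n1, 0 ≤ surrAdv P γ ρ0 R (σ i) (σ (i + 1)))
    (hσeps : ∀ i < n1, epsAdv P γ R (σ i) (σ (i + 1)) ≤ εR) :
    Jret P γ ρ0 R (σ n1) - Jret P γ ρ0 R (pol 0) ≥
      - (Real.sqrt (2 * δ) * γ / (1 - γ) ^ 2) * ((n1 : ℝ) + (n2 : ℝ)) * εR := by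
  have hP : ∀ s a, P s a ∈ stdSimplex ℝ S := fun s a => ⟨hP0 s a, hP1 s a⟩
  have hρ : ρ0 ∈ stdSimplex ℝ S := ⟨hρ0, hρ1⟩
  have hpol i (hi : i ≤ n2) s : pol i s ∈ stdSimplex ℝ A := ⟨hpol0 i hi s, hpol1 i hi s⟩
  have hσ i (hi : i ≤ n1) s : σ i s ∈ stdSimplex ℝ A := ⟨hσ0 i hi s, hσ1 i hi s⟩
  set C := √(2 * δ) * γ / (1 - γ) ^ 2 * εR with hC
  have hC0 : 0 ≤ C := by positivity
  have hσStep : ∀ i < n1, Jret P γ ρ0 R (σ i) - C ≤ Jret P γ ρ0 R (σ (i + 1)) := fun i hi => by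
    have hloss := Jret_add_surrAdv_sub_le hP hρ hγ0.le hγ1 (hσ i hi.le) (hσ (i + 1) hi)
      (hσabs i hi) (hσKL i hi) (hσeps i hi)
    have hgain := mul_nonneg (inv_nonneg.2 (sub_nonneg.2 hγ1.le)) (hσA i hi)
    linarith
  have hpolEnd : Jret P γ ρ0 R (pol 0) - n2 * C ≤ Jret P γ ρ0 R (pol n2) := by
    obtain _ | m := n2
    · simp
    have hloss := Jret_add_surrAdv_sub_le hP hρ hγ0.le hγ1 (hpol m m.le_succ) (hpol (m + 1) le_rfl)
      (hpabs m m.lt_succ_self) (hpKL m m.lt_succ_self) (hpeps m m.lt_succ_self)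
    have hpred := hpsurr m m.lt_succ_self
    rw [one_div] at hpred
    push_cast
    linarith [mul_nonneg m.cast_nonneg hC0]
  have hσEnd := sub_mul_le_of_forall_sub_le_succ (f := fun i => Jret P γ ρ0 R (σ i)) hσStep
  rw [hlink] at hσEnd
  rw [ge_iff_le, show -(√(2 * δ) * γ / (1 - γ) ^ 2) * ((n1 : ℝ) + n2) * εR = -(n1 * C) - n2 * C by
    ring]
  linarith

/-- adversarial update reward-budget bound (Theorem 4.2, reward part). -/
theorem adversarial_reward_budget_bound {S A : Type*} [Fintype S] [DecidableEq S] [Fintype A] [Nonempty S] [Nonempty A]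
    (P : S → A → S → ℝ) (hP0 : ∀ s a s', 0 ≤ P s a s') (hP1 : ∀ s a, ∑ s', P s a s' = 1)
    (γ : ℝ) (hγ0 : 0 < γ) (hγ1 : γ < 1)
    (ρ0 : S → ℝ) (hρ0 : ∀ s, 0 ≤ ρ0 s) (hρ1 : ∑ s, ρ0 s = 1)
    (δ : ℝ) (hδ : 0 < δ) (εR : ℝ) (hεR : 0 ≤ εR) (R : S → A → ℝ)
    (n1 n2 : ℕ) (pol σ : ℕ → S → A → ℝ)
    (hpol0 : ∀ i ≤ n2, ∀ s a, 0 ≤ pol i s a)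
    (hpol1 : ∀ i ≤ n2, ∀ s, ∑ a, pol i s a = 1)
    (hpabs : ∀ i < n2, ∀ s a, pol i s a = 0 → pol (i + 1) s a = 0)
    (hpKL : ∀ i < n2, avgKL P γ ρ0 (pol (i + 1)) (pol i) ≤ δ)
    (hpsurr : ∀ i < n2,
      Jret P γ ρ0 R (pol 0) ≤
        Jret P γ ρ0 R (pol i) + (1 / (1 - γ)) * surrAdv P γ ρ0 R (pol i) (pol (i + 1)))
    (hpeps : ∀ i < n2, epsAdv P γ R (pol i) (pol (i + 1)) ≤ εR)
    (hlink : σ 0 = pol n2)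
    (hσ0 : ∀ i ≤ n1, ∀ s a, 0 ≤ σ i s a)
    (hσ1 : ∀ i ≤ n1, ∀ s, ∑ a, σ i s a = 1)
    (hσabs : ∀ i < n1, ∀ s a, σ i s a = 0 → σ (i + 1) s a = 0)
    (hσKL : ∀ i < n1, avgKL P γ ρ0 (σ (i + 1)) (σ i) ≤ δ)
    (hσA : ∀ i < n1, 0 ≤ surrAdv P γ ρ0 R (σ i) (σ (i + 1)))
    (hσeps : ∀ i < n1, epsAdv P γ R (σ i) (σ (i + 1)) ≤ εR) :
    Jret P γ ρ0 R (σ n1) - Jret P γ ρ0 R (pol 0) ≥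
      - (Real.sqrt (2 * δ) * γ / (1 - γ) ^ 2) * ((n1 : ℝ) + (n2 : ℝ)) * εR :=
  adversarial_reward_budget_bound_general P hP0 hP1 γ hγ0 hγ1 ρ0 hρ0 hρ1 δ εR hεR R n1 n2 pol σ
    hpol0 hpol1 hpabs hpKL hpsurr hpeps hlink hσ0 hσ1 hσabs hσKL hσA hσeps
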